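/- Let θ be a CPWL function, let φ₀ and Φ be twice continuously differentiable around x̄ in the composite optimization setting, and suppose x̄ is a fully stable locally optimal solution of the canonically perturbed problem: minimize φ₀(x) + θ(Φ(x)+p₂) − ⟨p₁,x⟩ over x ∈ ℝ^n, at (p̄₁,p̄₂) = (0,0); i.e., there exist γ > 0 and neighborhoods U × W of (0,0) ∈ ℝ^n × ℝ^m such that the map (p₁,p₂) ↦ M_γ(p₁,p₂) := argmin{φ₀(x) + θ(Φ(x)+p₂) − ⟨p₁,x⟩ : ‖x − x̄‖ ≤ γ} is single-valued and Lipschitz continuous on U × W with M_γ(0,0) = {x̄}, and the value function (p₁,p₂) ↦ m_γ(p₁,p₂) := inf{φ₀(x) + θ(Φ(x)+p₂) − ⟨p₁,x⟩ : ‖x − x̄‖ ≤ γ} is Lipschitz continuous on U × W. Then every v ∈ Λ_com(x̄) is a noncritical multiplier. -/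

import Mathlib

open Filter Topology Set RealInnerProductSpace

noncomputable section

abbrev Ev (k : ℕ) := EuclideanSpace ℝ (Fin k)

/-- The Bouligand–Severi tangent cone to a set `s` at `x`. -/
def tcone {E : Type*} [NormedAddCommGroup E] [NormedSpace ℝ E] (s : Set E) (x : E) : Set E :=
  {w | ∃ (z : ℕ → E) (c : ℕ → ℝ), (∀ k, z k ∈ s) ∧ (∀ k, 0 ≤ c k) ∧
      Tendsto z atTop (𝓝 x) ∧ Tendsto (fun k => c k • (z k - x)) atTop (𝓝 w)}

/-- The data of a convex piecewise linear (CPWL) extended-real-valued function on `ℝ^m`: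
`θ(z) = max_i (⟨a i, z⟩ - al i)` on the polyhedron `dom θ = {z | ⟨d i, z⟩ ≤ be i ∀ i}`,
and `θ(z) = +∞` outside of it. -/
structure CPWL (m : ℕ) where
  l : ℕ
  p : ℕ
  hl : 0 < l
  a : Fin l → Ev m
  al : Fin l → ℝ
  d : Fin p → Ev m
  be : Fin p → ℝ
  dom_nonempty : ∃ z : Ev m, ∀ i, ⟪d i, z⟫ ≤ be i

namespace CPWL

variable {m : ℕ} (θ : CPWL m)

/-- The (polyhedral) domain of the CPWL function. -/
def dom : Set (Ev m) := {z | ∀ i, ⟪θ.d i, z⟫ ≤ θ.be i}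

/-- The real value `max_i (⟨a i, z⟩ - al i)` of the CPWL function (meaningful on its domain). -/
def val (z : Ev m) : ℝ := ⨆ i : Fin θ.l, (⟪θ.a i, z⟫ - θ.al i)

/-- The CPWL function as an extended-real-valued function. -/
def eval (z : Ev m) : EReal :=
  @ite _ (z ∈ θ.dom) (Classical.propDecidable _) ((θ.val z : ℝ) : EReal) ⊤

/-- The subdifferential (of convex analysis) of the CPWL function. -/
def subdiff (z : Ev m) : Set (Ev m) :=
  {v | z ∈ θ.dom ∧ ∀ z' ∈ θ.dom, ⟪v, z' - z⟫ ≤ θ.val z' - θ.val z}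

/-- Active indices `K(z)` of the max-representation. -/
def Kact (z : Ev m) : Set (Fin θ.l) := {i | θ.val z = ⟪θ.a i, z⟫ - θ.al i}

/-- Active indices `I(z)` of the domain constraints. -/
def Iact (z : Ev m) : Set (Fin θ.p) := {i | ⟪θ.d i, z⟫ = θ.be i}

/-- The critical cone `𝒦(z̄,v̄) = {w ∈ T(z̄; dom θ) : ⟨v̄,w⟩ = θ′(z̄;w)}`. -/
def crit (zb vb : Ev m) : Set (Ev m) :=
  {w | w ∈ tcone θ.dom zb ∧
    Tendsto (fun t : ℝ => (θ.val (zb + t • w) - θ.val zb) / t) (𝓝[>] (0 : ℝ))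
      (𝓝 ⟪vb, w⟫)}

/-- The graph of the subdifferential mapping. -/
def gph : Set (Ev m × Ev m) := {zv | zv.2 ∈ θ.subdiff zv.1}

/-- The graphical derivative `(D∂θ)(z̄,v̄)(u)`. -/
def Dsub (zb vb u : Ev m) : Set (Ev m) := {w | (u, w) ∈ tcone θ.gph (zb, vb)}

/-- The regular coderivative `(D̂*∂θ)(z̄,v̄)(u)`. -/
def Dhat (zb vb u : Ev m) : Set (Ev m) :=
  {w | ∀ h ∈ tcone θ.gph (zb, vb), ⟪w, h.1⟫ - ⟪u, h.2⟫ ≤ 0}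

end CPWL

section VarSys

variable {n m : ℕ}

/-- The adjoint `∇Φ(x)*` of the Jacobian of `Φ` at `x`. -/
def adjD (Φ : Ev n → Ev m) (x : Ev n) : Ev m →L[ℝ] Ev n :=
  ContinuousLinearMap.adjoint (fderiv ℝ Φ x)

/-- `Ψ(x,v) = f(x) + ∇Φ(x)* v`. -/
def Psi (f : Ev n → Ev n) (Φ : Ev n → Ev m) (x : Ev n) (v : Ev m) : Ev n :=
  f x + adjD Φ x v

/-- The partial Jacobian `∇ₓΨ(x̄,v̄)`. -/
def gradxPsi (f : Ev n → Ev n) (Φ : Ev n → Ev m) (xb : Ev n) (vb : Ev m) :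
    Ev n →L[ℝ] Ev n :=
  fderiv ℝ (fun x => Psi f Φ x vb) xb

/-- The Lagrange multiplier set `Λ(x̄)` of the variational system. -/
def Lam (f : Ev n → Ev n) (Φ : Ev n → Ev m) (θ : CPWL m) (xb : Ev n) : Set (Ev m) :=
  {v | Psi f Φ xb v = 0 ∧ v ∈ θ.subdiff (Φ xb)}

/-- `v̄` is a critical multiplier for the variational system. -/
def IsCritical (f : Ev n → Ev n) (Φ : Ev n → Ev m) (θ : CPWL m) (xb : Ev n) (vb : Ev m) :
    Prop :=
  ∃ ξ : Ev n, ξ ≠ 0 ∧ ∃ w ∈ θ.Dsub (Φ xb) vb (fderiv ℝ Φ xb ξ),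
    gradxPsi f Φ xb vb ξ + adjD Φ xb w = 0

/-- The solution map of the canonically perturbed variational system. -/
def Smap (f : Ev n → Ev n) (Φ : Ev n → Ev m) (θ : CPWL m) (p₁ : Ev n) (p₂ : Ev m) :
    Set (Ev n × Ev m) :=
  {xv | Psi f Φ xv.1 xv.2 = p₁ ∧ xv.2 ∈ θ.subdiff (Φ xv.1 + p₂)}

end VarSys

section General

variable {n m : ℕ}

/-- The subdifferential of a general extended-real-valued function. -/
def subdiffE (θ : Ev m → EReal) (z : Ev m) : Set (Ev m) :=
  {v | ∀ z', ((⟪v, z' - z⟫ : ℝ) : EReal) ≤ θ z' - θ z}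

/-- The graph of the subdifferential of a general extended-real-valued function. -/
def gphE (θ : Ev m → EReal) : Set (Ev m × Ev m) := {zv | zv.2 ∈ subdiffE θ zv.1}

/-- The graphical derivative of the subdifferential, general case. -/
def DsubE (θ : Ev m → EReal) (zb vb u : Ev m) : Set (Ev m) :=
  {w | (u, w) ∈ tcone (gphE θ) (zb, vb)}

/-- The Lagrange multiplier set, general case. -/
def LamE (f : Ev n → Ev n) (Φ : Ev n → Ev m) (θ : Ev m → EReal) (xb : Ev n) :
    Set (Ev m) :=
  {v | Psi f Φ xb v = 0 ∧ v ∈ subdiffE θ (Φ xb)}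

/-- The solution map of the canonically perturbed variational system, general case. -/
def SmapE (f : Ev n → Ev n) (Φ : Ev n → Ev m) (θ : Ev m → EReal) (p₁ : Ev n)
    (p₂ : Ev m) : Set (Ev n × Ev m) :=
  {xv | Psi f Φ xv.1 xv.2 = p₁ ∧ xv.2 ∈ subdiffE θ (Φ xv.1 + p₂)}

end General

section Composite

variable {n m : ℕ}

/-- The gradient `∇ₓL(·,v)` of the Lagrangian `L(x,v) = φ₀(x) + ⟨Φ(x),v⟩`. -/
def gradL (φ₀ : Ev n → ℝ) (Φ : Ev n → Ev m) (v : Ev m) (x : Ev n) : Ev n :=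
  gradient (fun y => φ₀ y + ⟪Φ y, v⟫) x

/-- The Hessian `∇²ₓₓL(x̄,v)` as a linear operator. -/
def HessOp (φ₀ : Ev n → ℝ) (Φ : Ev n → Ev m) (v : Ev m) (xb : Ev n) : Ev n →L[ℝ] Ev n :=
  fderiv ℝ (gradL φ₀ Φ v) xb

/-- The Lagrange multiplier set `Λ_com(x̄)` of the composite optimization problem. -/
def LamCom (φ₀ : Ev n → ℝ) (Φ : Ev n → Ev m) (θ : CPWL m) (xb : Ev n) : Set (Ev m) :=
  {v | gradient φ₀ xb + adjD Φ xb v = 0 ∧ v ∈ θ.subdiff (Φ xb)}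

/-- Criticality of a multiplier in the composite optimization setting. -/
def IsCriticalCom (φ₀ : Ev n → ℝ) (Φ : Ev n → Ev m) (θ : CPWL m) (xb : Ev n) (v : Ev m) :
    Prop :=
  ∃ ξ : Ev n, ξ ≠ 0 ∧ ∃ w ∈ θ.Dsub (Φ xb) v (fderiv ℝ Φ xb ξ),
    HessOp φ₀ Φ v xb ξ + adjD Φ xb w = 0

/-- The solution map of the canonically perturbed KKT system of composite optimization. -/
def SKKT (φ₀ : Ev n → ℝ) (Φ : Ev n → Ev m) (θ : CPWL m) (p₁ : Ev n) (p₂ : Ev m) :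
    Set (Ev n × Ev m) :=
  {xv | gradient φ₀ xv.1 + adjD Φ xv.1 xv.2 = p₁ ∧ xv.2 ∈ θ.subdiff (Φ xv.1 + p₂)}

/-- `x̄` is a local minimizer of `φ₀ + θ∘Φ`. -/
def LocalMin (φ₀ : Ev n → ℝ) (Φ : Ev n → Ev m) (θ : CPWL m) (xb : Ev n) : Prop :=
  ∃ U ∈ 𝓝 xb, ∀ x ∈ U,
    ((φ₀ xb : ℝ) : EReal) + θ.eval (Φ xb) ≤ ((φ₀ x : ℝ) : EReal) + θ.eval (Φ x)

end Composite

section Calmness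

variable {n m : ℕ}

/-- Isolated calmness of a solution map at `((0,0), q0)`. -/
def IsolCalm (S : Ev n × Ev m → Set (Ev n × Ev m)) (q0 : Ev n × Ev m) : Prop :=
  ∃ c : ℝ, 0 ≤ c ∧ ∃ U ∈ 𝓝 (0 : Ev n × Ev m), ∃ V ∈ 𝓝 q0,
    ∀ p ∈ U, ∀ q ∈ S p ∩ V, ‖q - q0‖ ≤ c * (‖p.1‖ + ‖p.2‖)

/-- Robust isolated calmness of a solution map at `((0,0), q0)`. -/
def RobustIsolCalm (S : Ev n × Ev m → Set (Ev n × Ev m)) (q0 : Ev n × Ev m) : Prop :=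
  ∃ c : ℝ, 0 ≤ c ∧ ∃ U ∈ 𝓝 (0 : Ev n × Ev m), ∃ V ∈ 𝓝 q0,
    (∀ p ∈ U, ∀ q ∈ S p ∩ V, ‖q - q0‖ ≤ c * (‖p.1‖ + ‖p.2‖)) ∧
    (∀ p ∈ U, (S p ∩ V).Nonempty)

/-- The Lipschitz-like (Aubin) property of a solution map around `((0,0), q0)`. -/
def LipschitzLike (S : Ev n × Ev m → Set (Ev n × Ev m)) (q0 : Ev n × Ev m) : Prop :=
  ∃ c : ℝ, 0 ≤ c ∧ ∃ U ∈ 𝓝 (0 : Ev n × Ev m), ∃ V ∈ 𝓝 q0,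
    ∀ p ∈ U, ∀ p' ∈ U, ∀ q ∈ S p ∩ V, ∃ q' ∈ S p', ‖q - q'‖ ≤ c * ‖p - p'‖

end Calmness

/-- The extended-real-valued objective of the two-parametrically perturbed composite problem. -/
def objFS {n m : ℕ} (φ₀ : Ev n → ℝ) (Φ : Ev n → Ev m) (θ : CPWL m)
    (p₁ : Ev n) (p₂ : Ev m) (x : Ev n) : EReal :=
  ((φ₀ x - ⟪p₁, x⟫ : ℝ) : EReal) + θ.eval (Φ x + p₂)

/-- The localized argmin set `M_γ(p₁,p₂)` (empty where the objective is `+∞`). -/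
def Mgam {n m : ℕ} (φ₀ : Ev n → ℝ) (Φ : Ev n → Ev m) (θ : CPWL m) (xb : Ev n)
    (γ : ℝ) (p₁ : Ev n) (p₂ : Ev m) : Set (Ev n) :=
  {x | ‖x - xb‖ ≤ γ ∧ objFS φ₀ Φ θ p₁ p₂ x ≠ ⊤ ∧
    ∀ y : Ev n, ‖y - xb‖ ≤ γ → objFS φ₀ Φ θ p₁ p₂ x ≤ objFS φ₀ Φ θ p₁ p₂ y}

/-- The localized optimal value function `m_γ(p₁,p₂)`. -/
def mgam {n m : ℕ} (φ₀ : Ev n → ℝ) (Φ : Ev n → Ev m) (θ : CPWL m) (xb : Ev n)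
    (γ : ℝ) (p₁ : Ev n) (p₂ : Ev m) : EReal :=
  ⨅ (x : Ev n) (_ : ‖x - xb‖ ≤ γ), objFS φ₀ Φ θ p₁ p₂ x

open Asymptotics

/-!
Suppose `v` were critical, witnessed by `ξ ≠ 0` and `w ∈ (D∂θ)(z̄, v)(u)` with `u = ∇Φ(x̄)ξ`.
Monotonicity of `∂θ` gives `⟪u, w⟫ ≥ 0`, so the criticality equation yields
`⟪∇²ₓₓL(x̄, v)ξ, ξ⟫ ≤ 0`: since `∇ₓL(x̄, v) = 0`, the Lagrangian `L(·, v)` rises by at most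
`o(t²)` along `x̄ + tξ`. On the other hand, because the graph of `∂θ` is polyhedral, the tangent
direction `(u, w)` forces `θ` to be finite and affine with slope `v` on the ray `z̄ + tu` for small
`t > 0`. The perturbation `p₂(t) = z̄ + tu - Φ(x̄ + tξ) = o(t)` puts `Φ(x̄ + tξ) + p₂(t)` on that
ray. Lipschitz continuity of the tilted minimizers yields growth of order `‖x - x(p₂)‖²` of the
perturbed objective around its minimizer `x(p₂) = g(0, p₂(t)) = x̄ + o(t)`, and subtracting the
subgradient inequality for `v` transfers this growth to `L(·, v)`. At `x = x̄ + tξ` this is growth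
of order `t²‖ξ‖²`, which is a contradiction.
-/

section Calculus

variable {E : Type*} [NormedAddCommGroup E] [NormedSpace ℝ E]

theorem isBigO_sub_pow_succ {F : Type*} [NormedAddCommGroup F] [NormedSpace ℝ F]
    {f : E → F} {f' : E → E →L[ℝ] F} {x₀ : E} {n : ℕ}
    (hff' : ∀ᶠ x in 𝓝 x₀, HasFDerivAt f (f' x) x) (hf' : f' =O[𝓝 x₀] fun x ↦ ‖x - x₀‖ ^ n) :
    (fun x ↦ f x - f x₀) =O[𝓝 x₀] fun x ↦ ‖x - x₀‖ ^ (n + 1) := by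
  obtain ⟨c, hc, hcf⟩ := hf'.exists_pos
  obtain ⟨r, hr, hball⟩ := Metric.eventually_nhds_iff_ball.mp (hff'.and hcf.bound)
  refine IsBigO.of_bound c ?_
  filter_upwards [Metric.ball_mem_nhds x₀ hr] with x hx
  have hseg : segment ℝ x₀ x ⊆ Metric.ball x₀ r :=
    (convex_ball x₀ r).segment_subset (Metric.mem_ball_self hr) hx
  have hbound : ∀ y ∈ segment ℝ x₀ x, ‖f' y‖ ≤ c * ‖x - x₀‖ ^ n := fun y hy ↦ by
    refine (hball y (hseg hy)).2.trans ?_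
    rw [norm_pow, norm_norm]
    gcongr
    exact norm_sub_le_of_mem_segment hy
  calc ‖f x - f x₀‖ ≤ c * ‖x - x₀‖ ^ n * ‖x - x₀‖ :=
        (convex_segment x₀ x).norm_image_sub_le_of_norm_hasFDerivWithin_le
          (fun y hy ↦ (hball y (hseg hy)).1.hasFDerivWithinAt) hbound
          (left_mem_segment ℝ x₀ x) (right_mem_segment ℝ x₀ x)
    _ = c * ‖‖x - x₀‖ ^ (n + 1)‖ := by rw [norm_pow, norm_norm, pow_succ, mul_assoc]

theorem eventually_le_add_mul_sq_of_hasDerivAt {ψ q : ℝ → ℝ} {h ε : ℝ}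
    (hψ : ∀ᶠ t in 𝓝 0, HasDerivAt ψ (q t) t) (hq : HasDerivAt q h 0) (hq0 : q 0 = 0)
    (hh : h ≤ 0) (hε : 0 < ε) :
    ∀ᶠ t in 𝓝 0, ψ t ≤ ψ 0 + ε * t ^ 2 := by
  obtain ⟨δ, hδ, hball⟩ := Metric.eventually_nhds_iff_ball.mp hψ
  have hnhds : 𝓝[Metric.ball (0 : ℝ) δ] 0 = 𝓝 0 :=
    nhdsWithin_eq_nhds.mpr (Metric.ball_mem_nhds 0 hδ)
  -- `ψ t - h t² / 2` has derivative `q t - h t = o(t)`, hence is `ψ 0 + o(t²)`.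
  have hrem := (convex_ball (0 : ℝ) δ).isLittleO_pow_succ_real (n := 1)
    (f := fun t ↦ ψ t - h / 2 * t ^ 2) (f' := fun t ↦ q t - h * t) (Metric.mem_ball_self hδ)
    (fun t ht ↦ ((hball t ht).sub ((hasDerivAt_pow 2 t).const_mul (h / 2))).hasDerivWithinAt
      |>.congr_deriv (by ring)) ?_
  · rw [hnhds] at hrem
    filter_upwards [hrem.bound hε] with t ht
    simp only [sub_zero, Real.norm_eq_abs, zero_pow two_ne_zero, mul_zero, abs_pow, Nat.reduceAdd,
      sq_abs] at ht
    nlinarith [abs_le.mp ht, sq_nonneg t]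
  · rw [hnhds]
    simpa [hq0, mul_comm] using hasDerivAt_iff_isLittleO.mp hq

theorem hasDerivAt_add_smul (x ξ : E) (t : ℝ) : HasDerivAt (fun t : ℝ ↦ x + t • ξ) ξ t := by
  simpa using ((hasDerivAt_id t).smul_const ξ).const_add x

theorem tendsto_add_smul_nhdsGT (x ξ : E) :
    Tendsto (fun t : ℝ ↦ x + t • ξ) (𝓝[>] 0) (𝓝 x) := by
  simpa using (hasDerivAt_add_smul x ξ 0).continuousAt.tendsto.mono_left nhdsWithin_le_nhds

theorem DifferentiableAt.isLittleO_sub_along {F : Type*} [NormedAddCommGroup F]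
    [NormedSpace ℝ F] {f : E → F} {x ξ : E} (hf : DifferentiableAt ℝ f x) :
    (fun t : ℝ ↦ f (x + t • ξ) - f x - t • fderiv ℝ f x ξ) =o[𝓝 0] id := by
  have := hasDerivAt_iff_isLittleO.mp
    (hf.hasFDerivAt.comp_hasDerivAt_of_eq 0 (hasDerivAt_add_smul x ξ 0) (by simp))
  simp only [Function.comp_def, zero_smul, add_zero, sub_zero] at this
  exact this

end Calculus

section SecondOrder

variable {E : Type*} [NormedAddCommGroup E] [InnerProductSpace ℝ E] [CompleteSpace E]
  {L : E → ℝ} {x : E}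

theorem isBigO_sub_sq_of_gradient_eq_zero (hL : ContDiffAt ℝ 2 L x) (hcrit : gradient L x = 0) :
    (fun y ↦ L y - L x) =O[𝓝 x] fun y ↦ ‖y - x‖ ^ 2 := by
  have hdiff : ∀ᶠ y in 𝓝 x, HasFDerivAt L (fderiv ℝ L y) y :=
    (hL.eventually (by simp)).mono fun y hy ↦ (hy.differentiableAt (by norm_num)).hasFDerivAt
  have hfderiv0 : fderiv ℝ L x = 0 := by rw [← toDual_gradient, hcrit, map_zero]
  refine isBigO_sub_pow_succ hdiff ?_
  have := ((hL.fderiv_right (m := 1) le_rfl).differentiableAt one_ne_zero).hasFDerivAt.isBigO_sub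
  simpa [hfderiv0] using this.norm_right

theorem eventually_le_add_mul_sq_along {ξ : E} {ε : ℝ} (hL : ContDiffAt ℝ 2 L x)
    (hcrit : gradient L x = 0) (hcurv : ⟪fderiv ℝ (gradient L) x ξ, ξ⟫ ≤ 0) (hε : 0 < ε) :
    ∀ᶠ t in 𝓝 0, L (x + t • ξ) ≤ L x + ε * t ^ 2 := by
  have hline0 : Tendsto (fun t : ℝ ↦ x + t • ξ) (𝓝 0) (𝓝 x) := by
    simpa using (hasDerivAt_add_smul x ξ 0).continuousAt.tendsto
  have hdiff : ∀ᶠ y in 𝓝 x, DifferentiableAt ℝ L y :=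
    (hL.eventually (by simp)).mono fun y hy ↦ hy.differentiableAt (by norm_num)
  have hgrad : DifferentiableAt ℝ (gradient L) x := by
    have := (InnerProductSpace.toDual ℝ E).symm.contDiff.contDiffAt.comp x
      (hL.fderiv_right (m := 1) le_rfl)
    exact this.differentiableAt one_ne_zero
  have hψ : ∀ᶠ t in 𝓝 (0 : ℝ),
      HasDerivAt (fun t ↦ L (x + t • ξ)) ⟪gradient L (x + t • ξ), ξ⟫ t :=
    (hline0.eventually hdiff).mono fun t ht ↦ by
      rw [inner_gradient_left]
      exact ht.hasFDerivAt.comp_hasDerivAt t (hasDerivAt_add_smul x ξ t)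
  have hq : HasDerivAt (fun t : ℝ ↦ ⟪gradient L (x + t • ξ), ξ⟫)
      ⟪fderiv ℝ (gradient L) x ξ, ξ⟫ 0 := by
    simpa using (hgrad.hasFDerivAt.comp_hasDerivAt_of_eq 0 (hasDerivAt_add_smul x ξ 0)
      (by simp)).inner ℝ (hasDerivAt_const 0 ξ)
  simpa using eventually_le_add_mul_sq_of_hasDerivAt hψ hq (by simp [hcrit]) hcurv hε

theorem not_eventually_add_sq_le_along {ξ : E} {κ : ℝ} {y : ℝ → E} (hL : ContDiffAt ℝ 2 L x)
    (hcrit : gradient L x = 0) (hcurv : ⟪fderiv ℝ (gradient L) x ξ, ξ⟫ ≤ 0) (hξ : ξ ≠ 0)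
    (hy : (fun t ↦ y t - x) =o[𝓝[>] 0] id) (hκ : 0 < κ) :
    ¬ ∀ᶠ t in 𝓝[>] 0, L (y t) + κ * ‖x + t • ξ - y t‖ ^ 2 ≤ L (x + t • ξ) := by
  intro hgrowth
  have hξ' : 0 < ‖ξ‖ := norm_pos_iff.mpr hξ
  -- small enough that an error of `2 ε t²` cannot absorb the growth `κ (t ‖ξ‖ / 2)²`
  set ε := κ * ‖ξ‖ ^ 2 / 16 with hε
  have hup := (eventually_le_add_mul_sq_along hL hcrit hcurv (ε := ε) (by positivity)).filter_mono
    (nhdsWithin_le_nhds (s := Ioi 0))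
  have hy0 : Tendsto y (𝓝[>] 0) (𝓝 x) :=
    tendsto_sub_nhds_zero_iff.mp (hy.trans_tendsto (tendsto_id.mono_left nhdsWithin_le_nhds))
  have hlow : (fun t ↦ L (y t) - L x) =o[𝓝[>] 0] fun t ↦ t ^ 2 :=
    ((isBigO_sub_sq_of_gradient_eq_zero hL hcrit).comp_tendsto hy0).trans_isLittleO
      (hy.norm_left.pow two_pos)
  refine (show ∀ᶠ t in 𝓝[>] (0 : ℝ), False from ?_).exists.elim fun _ ↦ id
  filter_upwards [hgrowth, hup, hlow.bound (show 0 < ε by positivity),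
    hy.bound (show 0 < ‖ξ‖ / 2 by positivity), self_mem_nhdsWithin]
    with t hg hu hl hc (ht : 0 < t)
  simp only [Real.norm_eq_abs, abs_pow, id, abs_of_pos ht] at hl hc
  have hdist : t * ‖ξ‖ / 2 ≤ ‖x + t • ξ - y t‖ := by
    have := norm_sub_norm_le (t • ξ) (y t - x)
    rw [norm_smul, Real.norm_eq_abs, abs_of_pos ht,
      show t • ξ - (y t - x) = x + t • ξ - y t by abel] at this
    linarith
  have hsq : κ * (t * ‖ξ‖ / 2) ^ 2 ≤ κ * ‖x + t • ξ - y t‖ ^ 2 := by gcongr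
  nlinarith [abs_le.mp hl, mul_pos hκ (mul_pos (pow_pos ht 2) (pow_pos hξ' 2))]

end SecondOrder

theorem eventually_add_mul_le {A B C : ℝ} (hA : A ≤ C) (hB : A = C → B ≤ 0) :
    ∀ᶠ t in 𝓝[>] (0 : ℝ), A + t * B ≤ C := by
  rcases hA.lt_or_eq with hlt | heq
  · have hcont : Continuous fun t : ℝ ↦ A + t * B := by fun_prop
    exact ((hcont.tendsto' 0 A (by simp)).mono_left nhdsWithin_le_nhds).eventually_le_const hlt
  · filter_upwards [self_mem_nhdsWithin] with t (ht : 0 < t)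
    nlinarith [hB heq]

namespace CPWL

variable {m : ℕ} (θ : CPWL m)

theorem term_le_val (z : Ev m) (i : Fin θ.l) : ⟪θ.a i, z⟫ - θ.al i ≤ θ.val z :=
  le_ciSup (f := fun i ↦ ⟪θ.a i, z⟫ - θ.al i) (Set.finite_range _).bddAbove i

theorem val_le {z : Ev m} {r : ℝ} (h : ∀ i, ⟪θ.a i, z⟫ - θ.al i ≤ r) : θ.val z ≤ r :=
  haveI : Nonempty (Fin θ.l) := ⟨⟨0, θ.hl⟩⟩
  ciSup_le h

variable {θ} {zb v u w : Ev m}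

theorem inner_sub_nonneg_of_mem_subdiff {z z' v' : Ev m} (hv : v ∈ θ.subdiff z)
    (hv' : v' ∈ θ.subdiff z') : 0 ≤ ⟪v' - v, z' - z⟫ := by
  have h₁ := hv.2 z' hv'.1
  have h₂ := hv'.2 z hv.1
  rw [← neg_sub z' z, inner_neg_right] at h₂
  rw [inner_sub_left]
  linarith

theorem exists_seq_of_mem_tcone_gph (h : (u, w) ∈ tcone θ.gph (zb, v)) :
    ∃ (z vs : ℕ → Ev m) (c : ℕ → ℝ), (∀ k, vs k ∈ θ.subdiff (z k)) ∧ (∀ k, 0 ≤ c k) ∧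
      Tendsto vs atTop (𝓝 v) ∧ Tendsto (fun k ↦ c k • (z k - zb)) atTop (𝓝 u) ∧
      Tendsto (fun k ↦ c k • (vs k - v)) atTop (𝓝 w) := by
  obtain ⟨zv, c, hmem, hc, hlim, hslim⟩ := h
  exact ⟨fun k ↦ (zv k).1, fun k ↦ (zv k).2, c, hmem, hc, (continuous_snd.tendsto _).comp hlim,
    (continuous_fst.tendsto _).comp hslim, (continuous_snd.tendsto _).comp hslim⟩

theorem inner_nonneg_of_mem_tcone_gph (hv : v ∈ θ.subdiff zb)
    (h : (u, w) ∈ tcone θ.gph (zb, v)) : 0 ≤ ⟪u, w⟫ := by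
  obtain ⟨z, vs, c, hvs, hc, -, hu, hw⟩ := exists_seq_of_mem_tcone_gph h
  refine ge_of_tendsto' (hu.inner hw) fun k ↦ ?_
  rw [real_inner_smul_left, real_inner_smul_right, real_inner_comm, ← mul_assoc]
  exact mul_nonneg (mul_nonneg (hc k) (hc k)) (inner_sub_nonneg_of_mem_subdiff hv (hvs k))

theorem inner_d_nonpos_of_mem_tcone_gph {i : Fin θ.p} (hi : i ∈ θ.Iact zb)
    (h : (u, w) ∈ tcone θ.gph (zb, v)) : ⟪θ.d i, u⟫ ≤ 0 := by
  obtain ⟨z, vs, c, hvs, hc, -, hu, -⟩ := exists_seq_of_mem_tcone_gph h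
  refine le_of_tendsto' (tendsto_const_nhds.inner hu) fun k ↦ ?_
  rw [inner_smul_right, inner_sub_right, hi]
  exact mul_nonpos_of_nonneg_of_nonpos (hc k) (sub_nonpos.mpr ((hvs k).1 i))

theorem inner_a_le_of_mem_tcone_gph (hzb : zb ∈ θ.dom) {i : Fin θ.l} (hi : i ∈ θ.Kact zb)
    (h : (u, w) ∈ tcone θ.gph (zb, v)) : ⟪θ.a i, u⟫ ≤ ⟪v, u⟫ := by
  obtain ⟨z, vs, c, hvs, hc, hv, hu, -⟩ := exists_seq_of_mem_tcone_gph h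
  refine le_of_tendsto_of_tendsto' (tendsto_const_nhds.inner hu) (hv.inner hu) fun k ↦ ?_
  rw [inner_smul_right, inner_smul_right]
  refine mul_le_mul_of_nonneg_left ?_ (hc k)
  have h₁ := θ.term_le_val (z k) i
  have h₂ := (hvs k).2 zb hzb
  rw [← neg_sub (z k) zb, inner_neg_right] at h₂
  rw [inner_sub_right]
  linarith [show θ.val zb = ⟪θ.a i, zb⟫ - θ.al i from hi]

theorem eventually_mem_dom_and_val_le (hv : v ∈ θ.subdiff zb)
    (h : (u, w) ∈ tcone θ.gph (zb, v)) :
    ∀ᶠ t in 𝓝[>] (0 : ℝ), zb + t • u ∈ θ.dom ∧ θ.val (zb + t • u) ≤ θ.val zb + t * ⟪v, u⟫ := by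
  have hdom : ∀ i, ∀ᶠ t in 𝓝[>] (0 : ℝ), ⟪θ.d i, zb + t • u⟫ ≤ θ.be i := fun i ↦ by
    simpa only [inner_add_right, inner_smul_right] using
      eventually_add_mul_le (hv.1 i) fun hi ↦ inner_d_nonpos_of_mem_tcone_gph hi h
  have hval : ∀ i, ∀ᶠ t in 𝓝[>] (0 : ℝ),
      ⟪θ.a i, zb + t • u⟫ - θ.al i ≤ θ.val zb + t * ⟪v, u⟫ := fun i ↦ by
    filter_upwards [eventually_add_mul_le (θ.term_le_val zb i) (B := ⟪θ.a i, u⟫ - ⟪v, u⟫)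
      fun hi ↦ sub_nonpos.mpr (inner_a_le_of_mem_tcone_gph hv.1 hi.symm h)] with t ht
    rw [inner_add_right, inner_smul_right]
    linarith
  filter_upwards [eventually_all.mpr hdom, eventually_all.mpr hval] with t h₁ h₂
  exact ⟨h₁, θ.val_le h₂⟩

end CPWL

section TiltStability

variable {E : Type*} [NormedAddCommGroup E] [InnerProductSpace ℝ E]

theorem add_sq_div_le_of_isMinOn_tilt {S : Set E} {f : E → ℝ} {g : E → E} {c ρ : ℝ} {x : E}
    (hc : 0 < c) (hgS : ∀ p ∈ Metric.closedBall 0 ρ, g p ∈ S)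
    (hmin : ∀ p ∈ Metric.closedBall 0 ρ, IsMinOn (fun y ↦ f y - ⟪p, y⟫) S (g p))
    (hcalm : ∀ p ∈ Metric.closedBall 0 ρ, ‖g p - g 0‖ ≤ c * ‖p‖) (hx : x ∈ S)
    (hd : ‖x - g 0‖ ≤ 2 * c * ρ) :
    f (g 0) + ‖x - g 0‖ ^ 2 / (4 * c) ≤ f x := by
  -- Tilting by `p` of length `‖x - g 0‖ / (2c)` towards `x` moves the minimizer by at most
  -- `c ‖p‖`, while the tilt gains `⟪p, x - g 0⟫ = ‖x - g 0‖² / (2c)`.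
  set p := (2 * c)⁻¹ • (x - g 0)
  have hp : ‖p‖ = ‖x - g 0‖ / (2 * c) := by
    rw [norm_smul, norm_inv, Real.norm_of_nonneg (by positivity), inv_mul_eq_div]
  have hpρ : p ∈ Metric.closedBall 0 ρ := by
    rw [mem_closedBall_zero_iff, hp, div_le_iff₀ (by positivity)]
    linarith
  have h0ρ : (0 : E) ∈ Metric.closedBall 0 ρ := Metric.mem_closedBall_self
    (nonneg_of_mul_nonneg_right ((norm_nonneg _).trans hd) (by positivity))
  have h₁ : f (g p) - ⟪p, g p⟫ ≤ f x - ⟪p, x⟫ := isMinOn_iff.mp (hmin p hpρ) x hx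
  have h₂ : f (g 0) ≤ f (g p) := by simpa using isMinOn_iff.mp (hmin 0 h0ρ) (g p) (hgS p hpρ)
  have h₃ : -(‖p‖ * (c * ‖p‖)) ≤ ⟪p, g 0 - g p⟫ := by
    refine (neg_le_neg (mul_le_mul_of_nonneg_left ?_ (norm_nonneg p))).trans
      (neg_le_of_abs_le (abs_real_inner_le_norm _ _))
    simpa [norm_sub_rev] using hcalm p hpρ
  have h₄ : ⟪p, x - g 0⟫ = ‖x - g 0‖ ^ 2 / (2 * c) := by
    rw [real_inner_smul_left, real_inner_self_eq_norm_sq, inv_mul_eq_div]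
  have h₅ : ⟪p, x⟫ - ⟪p, g p⟫ = ⟪p, x - g 0⟫ + ⟪p, g 0 - g p⟫ := by
    simp only [inner_sub_right]; ring
  rw [hp] at h₃
  have h₆ : ‖x - g 0‖ / (2 * c) * (c * (‖x - g 0‖ / (2 * c))) = ‖x - g 0‖ ^ 2 / (4 * c) := by
    field_simp; ring
  have h₇ : ‖x - g 0‖ ^ 2 / (2 * c) = 2 * (‖x - g 0‖ ^ 2 / (4 * c)) := by field_simp; ring
  linarith

end TiltStability

section Composite

variable {n m : ℕ} {θ : CPWL m} {φ₀ : Ev n → ℝ} {Φ : Ev n → Ev m} {xb x y : Ev n} {γ : ℝ}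
  {p₁ : Ev n} {p₂ : Ev m} {v : Ev m}

theorem objFS_of_mem_dom (h : Φ x + p₂ ∈ θ.dom) :
    objFS φ₀ Φ θ p₁ p₂ x = ((φ₀ x - ⟪p₁, x⟫ + θ.val (Φ x + p₂) : ℝ) : EReal) := by
  rw [objFS, CPWL.eval, if_pos h, ← EReal.coe_add]

theorem mem_dom_of_objFS_ne_top (h : objFS φ₀ Φ θ p₁ p₂ x ≠ ⊤) : Φ x + p₂ ∈ θ.dom := by
  by_contra hdom
  rw [objFS, CPWL.eval, if_neg hdom] at h
  exact h (EReal.add_top_of_ne_bot (EReal.coe_ne_bot _))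

theorem mem_dom_of_mem_Mgam (hx : x ∈ Mgam φ₀ Φ θ xb γ p₁ p₂) : Φ x + p₂ ∈ θ.dom :=
  mem_dom_of_objFS_ne_top hx.2.1

theorem le_of_mem_Mgam (hx : x ∈ Mgam φ₀ Φ θ xb γ p₁ p₂) (hy : ‖y - xb‖ ≤ γ)
    (hyd : Φ y + p₂ ∈ θ.dom) :
    φ₀ x - ⟪p₁, x⟫ + θ.val (Φ x + p₂) ≤ φ₀ y - ⟪p₁, y⟫ + θ.val (Φ y + p₂) := by
  have := hx.2.2 y hy
  rwa [objFS_of_mem_dom (mem_dom_of_mem_Mgam hx), objFS_of_mem_dom hyd,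
    EReal.coe_le_coe_iff] at this

theorem lagrangian_add_sq_div_le_of_Mgam_eq {U : Set (Ev n)} {W : Set (Ev m)}
    {g : Ev n × Ev m → Ev n} {c : NNReal} {ρ : ℝ} (hρU : Metric.closedBall 0 ρ ⊆ U)
    (hg : LipschitzOnWith c g (U ×ˢ W))
    (hMg : ∀ p₁ ∈ U, ∀ p₂ ∈ W, Mgam φ₀ Φ θ xb γ p₁ p₂ = {g (p₁, p₂)})
    (hv : v ∈ θ.subdiff (Φ xb)) (hp₂ : p₂ ∈ W) (hx : ‖x - xb‖ ≤ γ) (hxd : Φ x + p₂ ∈ θ.dom)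
    (hθx : θ.val (Φ x + p₂) ≤ θ.val (Φ xb) + ⟪v, Φ x + p₂ - Φ xb⟫)
    (hd : ‖x - g (0, p₂)‖ ≤ 2 * (c + 1) * ρ) :
    φ₀ (g (0, p₂)) + ⟪Φ (g (0, p₂)), v⟫ + ‖x - g (0, p₂)‖ ^ 2 / (4 * (c + 1)) ≤
      φ₀ x + ⟪Φ x, v⟫ := by
  have hρ : 0 ≤ ρ := nonneg_of_mul_nonneg_right ((norm_nonneg _).trans hd) (by positivity)
  have hmem : ∀ p ∈ Metric.closedBall 0 ρ, g (p, p₂) ∈ Mgam φ₀ Φ θ xb γ p p₂ := fun p hp ↦ by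
    rw [hMg p (hρU hp) p₂ hp₂]; rfl
  have h0 := hmem 0 (Metric.mem_closedBall_self hρ)
  have hgrowth : φ₀ (g (0, p₂)) + θ.val (Φ (g (0, p₂)) + p₂) +
      ‖x - g (0, p₂)‖ ^ 2 / (4 * (c + 1)) ≤ φ₀ x + θ.val (Φ x + p₂) := by
    refine add_sq_div_le_of_isMinOn_tilt (S := {y | ‖y - xb‖ ≤ γ ∧ Φ y + p₂ ∈ θ.dom})
      (f := fun y ↦ φ₀ y + θ.val (Φ y + p₂)) (g := fun p ↦ g (p, p₂)) (by positivity)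
      (fun p hp ↦ ⟨(hmem p hp).1, mem_dom_of_mem_Mgam (hmem p hp)⟩)
      (fun p hp ↦ isMinOn_iff.mpr fun y hy ↦ ?_) (fun p hp ↦ ?_) ⟨hx, hxd⟩ hd
    · have := le_of_mem_Mgam (hmem p hp) hy.1 hy.2
      linarith
    · have := hg.dist_le_mul (p, p₂) ⟨hρU hp, hp₂⟩ (0, p₂)
        ⟨hρU (Metric.mem_closedBall_self hρ), hp₂⟩
      rw [Prod.dist_eq, dist_self, max_eq_left dist_nonneg, dist_zero_right, dist_eq_norm] at this
      refine this.trans (mul_le_mul_of_nonneg_right ?_ (norm_nonneg p))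
      norm_cast
      exact le_add_of_nonneg_right zero_le_one
  have hsub := hv.2 _ (mem_dom_of_mem_Mgam h0)
  simp only [inner_sub_right, inner_add_right, real_inner_comm v] at hsub hθx ⊢
  linarith

theorem eventually_lagrangian_add_sq_div_le_along {U : Set (Ev n)} {W : Set (Ev m)}
    {g : Ev n × Ev m → Ev n} {c : NNReal} {ρ : ℝ} {ξ : Ev n} {w : Ev m} {p : ℝ → Ev m}
    (hρU : Metric.closedBall 0 ρ ⊆ U) (hg : LipschitzOnWith c g (U ×ˢ W))
    (hMg : ∀ p₁ ∈ U, ∀ p₂ ∈ W, Mgam φ₀ Φ θ xb γ p₁ p₂ = {g (p₁, p₂)}) (hγ : 0 < γ) (hρ : 0 < ρ)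
    (hv : v ∈ θ.subdiff (Φ xb)) (hw : w ∈ θ.Dsub (Φ xb) v (fderiv ℝ Φ xb ξ))
    (hp : ∀ t : ℝ, Φ (xb + t • ξ) + p t = Φ xb + t • fderiv ℝ Φ xb ξ)
    (hpW : ∀ᶠ t in 𝓝[>] 0, p t ∈ W) (hgp : Tendsto (fun t ↦ g (0, p t)) (𝓝[>] 0) (𝓝 xb)) :
    ∀ᶠ t in 𝓝[>] 0, φ₀ (g (0, p t)) + ⟪Φ (g (0, p t)), v⟫ +
      ‖xb + t • ξ - g (0, p t)‖ ^ 2 / (4 * (c + 1)) ≤ φ₀ (xb + t • ξ) + ⟪Φ (xb + t • ξ), v⟫ := by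
  have hline := tendsto_add_smul_nhdsGT xb ξ
  have hball : ∀ᶠ t in 𝓝[>] (0 : ℝ), ‖xb + t • ξ - xb‖ ≤ γ := by
    simpa only [Metric.mem_closedBall, dist_eq_norm] using
      hline.eventually_mem (Metric.closedBall_mem_nhds xb hγ)
  have hclose : ∀ᶠ t in 𝓝[>] (0 : ℝ), ‖xb + t • ξ - g (0, p t)‖ ≤ 2 * (c + 1) * ρ := by
    have := (hline.sub hgp).norm
    rw [sub_self, norm_zero] at this
    exact this.eventually_le_const (by positivity)
  filter_upwards [hpW, hball, hclose, CPWL.eventually_mem_dom_and_val_le hv hw]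
    with t hpt hxt hdt ⟨hdom, hval⟩
  refine lagrangian_add_sq_div_le_of_Mgam_eq hρU hg hMg hv hpt hxt (hp t ▸ hdom) ?_ hdt
  rwa [hp t, add_sub_cancel_left, inner_smul_right]

theorem hasGradientAt_lagrangian (hφ₀ : DifferentiableAt ℝ φ₀ x) (hΦ : DifferentiableAt ℝ Φ x)
    (v : Ev m) :
    HasGradientAt (fun y ↦ φ₀ y + ⟪Φ y, v⟫) (gradient φ₀ x + adjD Φ x v) x := by
  rw [hasGradientAt_iff_hasFDerivAt, map_add]
  refine hφ₀.hasGradientAt.hasFDerivAt.add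
    ((hΦ.hasFDerivAt.inner ℝ (hasFDerivAt_const v x)).congr_fderiv ?_)
  ext h
  simp [adjD, ContinuousLinearMap.adjoint_inner_left, real_inner_comm]

theorem inner_hessOp_nonpos (hv : v ∈ θ.subdiff (Φ xb)) {ξ : Ev n} {w : Ev m}
    (hw : w ∈ θ.Dsub (Φ xb) v (fderiv ℝ Φ xb ξ)) (h : HessOp φ₀ Φ v xb ξ + adjD Φ xb w = 0) :
    ⟪HessOp φ₀ Φ v xb ξ, ξ⟫ ≤ 0 := by
  rw [eq_neg_of_add_eq_zero_left h, inner_neg_left, adjD, ContinuousLinearMap.adjoint_inner_left,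
    real_inner_comm, neg_nonpos]
  exact CPWL.inner_nonneg_of_mem_tcone_gph hv hw

end Composite

theorem stmt10_general {n m : ℕ} (θ : CPWL m) (φ₀ : Ev n → ℝ) (Φ : Ev n → Ev m) (xb : Ev n)
    (hphi : ContDiffAt ℝ 2 φ₀ xb) (hPhi : ContDiffAt ℝ 2 Φ xb)
    (hfull : ∃ γ : ℝ, 0 < γ ∧ ∃ U ∈ 𝓝 (0 : Ev n), ∃ W ∈ 𝓝 (0 : Ev m),
      (∃ (g : Ev n × Ev m → Ev n) (c : NNReal), LipschitzOnWith c g (U ×ˢ W) ∧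
        (∀ p₁ ∈ U, ∀ p₂ ∈ W, Mgam φ₀ Φ θ xb γ p₁ p₂ = {g (p₁, p₂)}) ∧
        g (0, 0) = xb) ∧
      (∃ (mv : Ev n × Ev m → ℝ) (c' : NNReal), LipschitzOnWith c' mv (U ×ˢ W) ∧
        ∀ p₁ ∈ U, ∀ p₂ ∈ W, mgam φ₀ Φ θ xb γ p₁ p₂ = ((mv (p₁, p₂) : ℝ) : EReal))) :
    ∀ v ∈ LamCom φ₀ Φ θ xb, ¬ IsCriticalCom φ₀ Φ θ xb v := by
  rintro v ⟨hstat, hv⟩ ⟨ξ, hξ, w, hw, hHw⟩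
  obtain ⟨γ, hγ, U, hU, W, hW, ⟨g, c, hg, hMg, hg0⟩, -⟩ := hfull
  obtain ⟨ρ, hρ, hρU⟩ := Metric.nhds_basis_closedBall.mem_iff.mp hU
  have hΦ := hPhi.differentiableAt (by norm_num)
  -- `p t = o(t)` moves `Φ (xb + t ξ)` onto the ray `Φ xb + t u`, along which `θ` is affine.
  set u := fderiv ℝ Φ xb ξ
  set p : ℝ → Ev m := fun t ↦ Φ xb + t • u - Φ (xb + t • ξ)
  have hp : p =o[𝓝[>] 0] id := by
    refine (hΦ.isLittleO_sub_along (ξ := ξ)).neg_left.mono nhdsWithin_le_nhds |>.congr_left ?_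
    intro t; simp only [p]; abel
  have hpW : ∀ᶠ t in 𝓝[>] 0, p t ∈ W :=
    (hp.trans_tendsto (tendsto_id.mono_left nhdsWithin_le_nhds)).eventually_mem hW
  have hy : (fun t ↦ g (0, p t) - xb) =o[𝓝[>] 0] id := by
    refine (IsBigO.of_bound c (hpW.mono fun t ht ↦ ?_)).trans_isLittleO hp
    have := hg.dist_le_mul (0, p t) ⟨mem_of_mem_nhds hU, ht⟩ (0, 0)
      ⟨mem_of_mem_nhds hU, mem_of_mem_nhds hW⟩
    rwa [hg0, Prod.dist_eq, dist_self, max_eq_right dist_nonneg, dist_zero_right,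
      dist_eq_norm] at this
  refine not_eventually_add_sq_le_along (L := fun y ↦ φ₀ y + ⟪Φ y, v⟫)
    (hphi.add (hPhi.inner ℝ contDiffAt_const))
    (by rw [(hasGradientAt_lagrangian (hphi.differentiableAt (by norm_num)) hΦ v).gradient, hstat])
    (inner_hessOp_nonpos hv hw hHw) hξ hy (κ := 1 / (4 * (c + 1))) (by positivity) ?_
  simpa only [one_div_mul_eq_div] using eventually_lagrangian_add_sq_div_le_along hρU hg hMg hγ hρ
    hv hw (fun t ↦ by simp only [p]; abel) hpW
    (tendsto_sub_nhds_zero_iff.mp (hy.trans_tendsto (tendsto_id.mono_left nhdsWithin_le_nhds)))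

/-- full stability of a local minimizer of the canonically perturbed
composite problem rules out critical multipliers. -/
theorem stmt10 {n m : ℕ} (θ : CPWL m) (φ₀ : Ev n → ℝ) (Φ : Ev n → Ev m) (xb : Ev n)
    (hphi : ContDiffAt ℝ 2 φ₀ xb) (hPhi : ContDiffAt ℝ 2 Φ xb)
    (hdom : Φ xb ∈ θ.dom)
    (hfull : ∃ γ : ℝ, 0 < γ ∧ ∃ U ∈ 𝓝 (0 : Ev n), ∃ W ∈ 𝓝 (0 : Ev m),
      (∃ (g : Ev n × Ev m → Ev n) (c : NNReal), LipschitzOnWith c g (U ×ˢ W) ∧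
        (∀ p₁ ∈ U, ∀ p₂ ∈ W, Mgam φ₀ Φ θ xb γ p₁ p₂ = {g (p₁, p₂)}) ∧
        g (0, 0) = xb) ∧
      (∃ (mv : Ev n × Ev m → ℝ) (c' : NNReal), LipschitzOnWith c' mv (U ×ˢ W) ∧
        ∀ p₁ ∈ U, ∀ p₂ ∈ W, mgam φ₀ Φ θ xb γ p₁ p₂ = ((mv (p₁, p₂) : ℝ) : EReal))) :
    ∀ v ∈ LamCom φ₀ Φ θ xb, ¬ IsCriticalCom φ₀ Φ θ xb v :=
  stmt10_general θ φ₀ Φ xb hphi hPhi hfull
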